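/- For ε ∈ (0,1/4], with f^ε(p) := E[min{(p−S^ε)₊,(1−p)₊}] where S^ε is 0 with probability (1+ε)/2 and 1/4 with probability (1−ε)/2: the unique maximizer of f^ε on [0,1] is p = 1/2 with maximum value (3+ε)/8, and for every p ∈ [9/16, 1], f^ε(1/2) − f^ε(p) ≥ ε/16. -/
import Mathlib


open MeasureTheory

noncomputable def fgft (p s b : ℝ) : ℝ := min (max (p - s) 0) (max (b - p) 0)

/-- seller distribution: 0 w.p. (1+ε)/2, 1/4 w.p. (1-ε)/2 -/
noncomputable def sellerEps (ε : ℝ) : Measure ℝ :=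
  ENNReal.ofReal ((1 + ε)/2) • Measure.dirac 0
    + ENNReal.ofReal ((1 - ε)/2) • Measure.dirac (1/4)

noncomputable def fEps (ε p : ℝ) : ℝ := ∫ s, fgft p s 1 ∂(sellerEps ε)

lemma fEps_eq (ε p : ℝ) (h0 : 0 ≤ ε) (h1 : ε ≤ 1) :
    fEps ε p = (1+ε)/2 * min (max p 0) (max (1-p) 0)
      + (1-ε)/2 * min (max (p-1/4) 0) (max (1-p) 0) := by
  have hint : ∀ a : ℝ, Integrable (fun s => fgft p s 1) (Measure.dirac a) := by
    intro a
    refine (integrable_const (fgft p a 1)).congr ?_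
    rw [ae_dirac_eq]
    exact Filter.eventually_pure.mpr rfl
  unfold fEps sellerEps
  rw [integral_add_measure ((hint 0).smul_measure (by simp)) ((hint _).smul_measure (by simp)),
    integral_smul_measure, integral_smul_measure, integral_dirac, integral_dirac,
    ENNReal.toReal_ofReal (by linarith), ENNReal.toReal_ofReal (by linarith)]
  unfold fgft
  simp only [smul_eq_mul, sub_zero]


theorem fEps_pos_max (ε : ℝ) (hε : ε ∈ Set.Ioc (0:ℝ) (1/4)) :
    fEps ε (1/2) = (3 + ε)/8 ∧
      (∀ p ∈ Set.Icc (0:ℝ) 1,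
        fEps ε p ≤ fEps ε (1/2) ∧ (fEps ε p = fEps ε (1/2) → p = 1/2)) ∧
      ∀ p ∈ Set.Icc (9/16 : ℝ) 1, fEps ε (1/2) - fEps ε p ≥ ε/16 := by
  obtain ⟨hε0, hε4⟩ := hε
  have h0 : (0:ℝ) ≤ ε := hε0.le
  have h1 : ε ≤ 1 := by linarith
  have hval : fEps ε (1/2) = (3 + ε)/8 := by
    rw [fEps_eq ε (1/2) h0 h1]
    rw [show max (1/2 : ℝ) 0 = 1/2 by norm_num,
        show max (1 - 1/2 : ℝ) 0 = 1/2 by norm_num,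
        show max ((1:ℝ)/2 - 1/4) 0 = 1/4 by norm_num,
        min_self, show min (1/4 : ℝ) (1/2) = 1/4 by norm_num]
    ring
  refine ⟨hval, ?_, ?_⟩
  · intro p hp
    obtain ⟨hp0, hp1⟩ := hp
    rw [hval, fEps_eq ε p h0 h1]
    rw [max_eq_left hp0, max_eq_left (by linarith : (0:ℝ) ≤ 1 - p)]
    rcases le_total p (1/4) with hA | hA
    · rw [max_eq_right (by linarith : p - 1/4 ≤ 0),
        min_eq_left (by linarith : p ≤ 1 - p),
        min_eq_left (by linarith : (0:ℝ) ≤ 1 - p)]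
      constructor
      · nlinarith
      · intro heq; nlinarith
    · rw [max_eq_left (by linarith : (0:ℝ) ≤ p - 1/4)]
      rcases le_total p (1/2) with hB | hB
      · rw [min_eq_left (by linarith : p ≤ 1 - p),
          min_eq_left (by linarith : p - 1/4 ≤ 1 - p)]
        constructor
        · linarith
        · intro heq; linarith
      · rcases le_total p (5/8) with hC | hC
        · rw [min_eq_right (by linarith : 1 - p ≤ p),
            min_eq_left (by linarith : p - 1/4 ≤ 1 - p)]
          constructor
          · nlinarith [mul_nonneg h0 (by linarith : (0:ℝ) ≤ p - 1/2)]
          · intro heq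
            have h2 : ε * (p - 1/2) = 0 := by linear_combination -heq
            rcases mul_eq_zero.mp h2 with h | h
            · linarith
            · linarith
        · rw [min_eq_right (by linarith : 1 - p ≤ p),
            min_eq_right (by linarith : 1 - p ≤ p - 1/4)]
          constructor
          · nlinarith
          · intro heq; nlinarith
  · intro p hp
    obtain ⟨hp0, hp1⟩ := hp
    rw [hval, fEps_eq ε p h0 h1]
    rw [max_eq_left (by linarith : (0:ℝ) ≤ p),
      max_eq_left (by linarith : (0:ℝ) ≤ 1 - p),
      max_eq_left (by linarith : (0:ℝ) ≤ p - 1/4),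
      min_eq_right (by linarith : 1 - p ≤ p)]
    rcases le_total p (5/8) with hC | hC
    · rw [min_eq_left (by linarith : p - 1/4 ≤ 1 - p)]
      nlinarith [mul_nonneg h0 (by linarith : (0:ℝ) ≤ p - 9/16)]
    · rw [min_eq_right (by linarith : 1 - p ≤ p - 1/4)]
      nlinarith
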